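/- arXiv:2410.17226 — 2 statements merged into one kernel-verified Lean document; each statement's English description precedes it below -/
import Mathlib

section
/- Cluster-based query correctness: let S be a vertex set with diameter at most d, and for vertices u, v define Δ_u, Δ_v and subsets S_u[i], S_v[j] as in the cluster distance vector. If S_u[i] ∩ S_v[j] ≠ ∅, then there exists a walk from u to v of length Δ_u + Δ_v + i + j; hence δ(u,v) ≤ Δ_u + Δ_v + i + j. -/
theorem stmt_9 {V : Type*} (G : SimpleGraph V) (hG : G.Connected)
    (d : ℕ) (S : Finset V) (hS : S.Nonempty)
    (hd : ∀ s ∈ S, ∀ t ∈ S, G.dist s t ≤ d) (u v : V) (i j : ℕ)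
    (hi : i ≤ d) (hj : j ≤ d)
    (hne : ∃ s ∈ S, G.dist s u = S.inf' hS (fun s => G.dist s u) + i ∧
                    G.dist s v = S.inf' hS (fun s => G.dist s v) + j) :
    (∃ p : G.Walk u v,
        p.length = S.inf' hS (fun s => G.dist s u) + S.inf' hS (fun s => G.dist s v) + i + j) ∧
    G.dist u v ≤ S.inf' hS (fun s => G.dist s u) + S.inf' hS (fun s => G.dist s v) + i + j := by
  obtain ⟨s, hs, hsu, hsv⟩ := hne
  obtain ⟨pu, hpu⟩ := hG.exists_walk_length_eq_dist s u
  obtain ⟨pv, hpv⟩ := hG.exists_walk_length_eq_dist s v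
  refine ⟨⟨pu.reverse.append pv, ?_⟩, ?_⟩
  · simp [SimpleGraph.Walk.length_append, hpu, hpv, hsu, hsv]; omega
  · calc G.dist u v ≤ (pu.reverse.append pv).length := SimpleGraph.dist_le _
      _ = _ := by simp [SimpleGraph.Walk.length_append, hpu, hpv, hsu, hsv]; omega
end

section
/- Cluster query is the exact minimum over the cluster: min over all pairs (i,j) ∈ {0,…,d}² with S_u[i] ∩ S_v[j] ≠ ∅ of (Δ_u + Δ_v + i + j) equals min_{s∈S} (δ(u,s) + δ(s,v)). -/
theorem stmt_10 {V : Type*} (G : SimpleGraph V) (hG : G.Connected)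
    (d : ℕ) (S : Finset V) (hS : S.Nonempty)
    (hd : ∀ s ∈ S, ∀ t ∈ S, G.dist s t ≤ d) (u v : V) :
    sInf {m : ℕ | ∃ i ≤ d, ∃ j ≤ d,
        (∃ s ∈ S, G.dist s u = S.inf' hS (fun s => G.dist s u) + i ∧
                  G.dist s v = S.inf' hS (fun s => G.dist s v) + j) ∧
        m = S.inf' hS (fun s => G.dist s u) + S.inf' hS (fun s => G.dist s v) + i + j}
      = S.inf' hS (fun s => G.dist u s + G.dist s v) := by
  set Δu := S.inf' hS (fun s => G.dist s u) with hΔu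
  set Δv := S.inf' hS (fun s => G.dist s v) with hΔv
  obtain ⟨su, hsu, hsu'⟩ := S.exists_mem_eq_inf' hS (fun s => G.dist s u)
  obtain ⟨sv, hsv, hsv'⟩ := S.exists_mem_eq_inf' hS (fun s => G.dist s v)
  obtain ⟨s, hs, hsmin⟩ := S.exists_mem_eq_inf' hS (fun s => G.dist u s + G.dist s v)
  have hΔus : Δu ≤ G.dist s u := S.inf'_le _ hs
  have hΔvs : Δv ≤ G.dist s v := S.inf'_le _ hs
  have htri_u : G.dist s u ≤ d + Δu := by
    calc G.dist s u ≤ G.dist s su + G.dist su u := hG.dist_triangle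
    _ ≤ d + Δu := by
      have := hd s hs su hsu
      omega
  have htri_v : G.dist s v ≤ d + Δv := by
    calc G.dist s v ≤ G.dist s sv + G.dist sv v := hG.dist_triangle
    _ ≤ d + Δv := by
      have := hd s hs sv hsv
      omega
  have hmem : S.inf' hS (fun s => G.dist u s + G.dist s v) ∈
      {m : ℕ | ∃ i ≤ d, ∃ j ≤ d,
        (∃ s ∈ S, G.dist s u = Δu + i ∧ G.dist s v = Δv + j) ∧
        m = Δu + Δv + i + j} := by
    refine ⟨G.dist s u - Δu, by omega, G.dist s v - Δv, by omega,
      ⟨s, hs, by omega, by omega⟩, ?_⟩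
    rw [hsmin, show G.dist u s = G.dist s u from G.dist_comm]
    omega
  refine le_antisymm (Nat.sInf_le hmem) (le_csInf ⟨_, hmem⟩ ?_)
  rintro m ⟨i, hi, j, hj, ⟨s', hs', h1, h2⟩, rfl⟩
  calc S.inf' hS (fun s => G.dist u s + G.dist s v) ≤ G.dist u s' + G.dist s' v :=
      S.inf'_le _ hs'
  _ = Δu + Δv + i + j := by rw [show G.dist u s' = G.dist s' u from G.dist_comm]; omega
end
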